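/- Let n ∈ ℕ, X ∈ ℝ^{n×n}, β ∈ ℝ, d > 0, σ ∈ {-1,1}^n and i,j ∈ {1,…,n}. Let J_{ij} be the n×n matrix with 1 in position (i,j) and 0 elsewhere, and let Dμ(σ) denote the derivative at ξ = 0 of the map ξ ↦ μ_{β/√d, X + ξ J_{ij}}(σ). Then there exists ξ ∈ [0,1] such that | μ_{β/√d, X + J_{ij}}(σ) − μ_{β/√d, X}(σ) − Dμ(σ) | ≤ (3β²/d) · μ_{β/√d, X + ξ J_{ij}}(σ). -/

import Mathlib

open MeasureTheory ProbabilityTheory Filter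

noncomputable section

/-- The value of a ±1 spin encoded as a Boolean. -/
def spin (b : Bool) : ℝ := if b then 1 else -1

/-- The Ising Hamiltonian `H(σ; X) = ∑_{i,j} X i j σ(i) σ(j)`. -/
def Ham {n : ℕ} (X : Fin n → Fin n → ℝ) (σ : Fin n → Bool) : ℝ :=
  ∑ i, ∑ j, X i j * spin (σ i) * spin (σ j)

/-- The partition function `Z(β, X)`. -/
def Zpart {n : ℕ} (β : ℝ) (X : Fin n → Fin n → ℝ) : ℝ :=
  ∑ σ : Fin n → Bool, Real.exp (-β * Ham X σ)

/-- The Gibbs probability mass function `μ_{β,X}(σ)`. -/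
def gibbs {n : ℕ} (β : ℝ) (X : Fin n → Fin n → ℝ) (σ : Fin n → Bool) : ℝ :=
  Real.exp (-β * Ham X σ) / Zpart β X

/-- A configuration is a bisection if `|∑ i σ(i)| ≤ 1`. -/
def isBis {n : ℕ} (σ : Fin n → Bool) : Prop := |∑ i, spin (σ i)| ≤ 1

open scoped Classical in
/-- The bisection partition function `Z^bis(β, X)`. -/
def ZpartBis {n : ℕ} (β : ℝ) (X : Fin n → Fin n → ℝ) : ℝ :=
  ∑ σ : Fin n → Bool, if isBis σ then Real.exp (-β * Ham X σ) else 0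

open scoped Classical in
/-- The bisection Gibbs probability mass function `μ^bis_{β,X}(σ)`. -/
def gibbsBis {n : ℕ} (β : ℝ) (X : Fin n → Fin n → ℝ) (σ : Fin n → Bool) : ℝ :=
  if isBis σ then Real.exp (-β * Ham X σ) / ZpartBis β X else 0

/-- The overlap `R_{1,2}(σ1, σ2) = (1/n) ∑ i σ1(i) σ2(i)`. -/
def overlap {n : ℕ} (σ1 σ2 : Fin n → Bool) : ℝ :=
  (1 / (n : ℝ)) * ∑ i, spin (σ1 i) * spin (σ2 i)

/-- Gibbs average of a one-variable observable. -/
def avg1 {n : ℕ} (β : ℝ) (X : Fin n → Fin n → ℝ) (f : (Fin n → Bool) → ℝ) : ℝ :=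
  ∑ σ : Fin n → Bool, f σ * gibbs β X σ

/-- Bisection Gibbs average of a one-variable observable. -/
def avg1Bis {n : ℕ} (β : ℝ) (X : Fin n → Fin n → ℝ) (f : (Fin n → Bool) → ℝ) : ℝ :=
  ∑ σ : Fin n → Bool, f σ * gibbsBis β X σ

/-- Coupled Gibbs average: `σ1 ~ μ_{β,X}`, `σ2 ~ μ_{β,Y}` independent. -/
def avg2c {n : ℕ} (β : ℝ) (X Y : Fin n → Fin n → ℝ)
    (f : (Fin n → Bool) → (Fin n → Bool) → ℝ) : ℝ :=
  ∑ σ1 : Fin n → Bool, ∑ σ2 : Fin n → Bool, f σ1 σ2 * gibbs β X σ1 * gibbs β Y σ2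

/-- Gibbs average of a two-replica observable. -/
def avg2 {n : ℕ} (β : ℝ) (X : Fin n → Fin n → ℝ)
    (f : (Fin n → Bool) → (Fin n → Bool) → ℝ) : ℝ :=
  avg2c β X X f

/-- Coupled bisection Gibbs average. -/
def avg2cBis {n : ℕ} (β : ℝ) (X Y : Fin n → Fin n → ℝ)
    (f : (Fin n → Bool) → (Fin n → Bool) → ℝ) : ℝ :=
  ∑ σ1 : Fin n → Bool, ∑ σ2 : Fin n → Bool, f σ1 σ2 * gibbsBis β X σ1 * gibbsBis β Y σ2

/-- Bisection Gibbs average of a two-replica observable. -/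
def avg2Bis {n : ℕ} (β : ℝ) (X : Fin n → Fin n → ℝ)
    (f : (Fin n → Bool) → (Fin n → Bool) → ℝ) : ℝ :=
  avg2cBis β X X f

/-- The SK disorder: i.i.d. entries `N(0, 1/(2n))`. -/
def skMeasure (n : ℕ) : Measure (Fin n → Fin n → ℝ) :=
  Measure.pi fun _ => Measure.pi fun _ => gaussianReal 0 (1 / (2 * n))

/-- The law of the pair `(g, g')` of independent SK disorders. -/
def skPair (n : ℕ) : Measure ((Fin n → Fin n → ℝ) × (Fin n → Fin n → ℝ)) :=
  (skMeasure n).prod (skMeasure n)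

/-- The perturbed SK disorder `g_t = √(1-t) g + √t g'`. -/
def skPerturb {n : ℕ} (t : ℝ) (g g' : Fin n → Fin n → ℝ) : Fin n → Fin n → ℝ :=
  fun i j => Real.sqrt (1 - t) * g i j + Real.sqrt t * g' i j

/-- The sparse disorder: i.i.d. entries `Poisson(d/(2n))`. -/
def sparseMeasure (n : ℕ) (d : ℝ) : Measure (Fin n → Fin n → ℕ) :=
  Measure.pi fun _ => Measure.pi fun _ => poissonMeasure (d / (2 * n)).toNNReal

/-- The law of the triple `(A^{(1-t)}, A^{(t,1)}, A^{(t,2)})` of independent sparse disorders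
used to build the coupled pair `A = A^{(1-t)} + A^{(t,1)}`, `A_t = A^{(1-t)} + A^{(t,2)}`. -/
def coupledSparse (n : ℕ) (d t : ℝ) :
    Measure ((Fin n → Fin n → ℕ) × (Fin n → Fin n → ℕ) × (Fin n → Fin n → ℕ)) :=
  (sparseMeasure n ((1 - t) * d)).prod
    ((sparseMeasure n (t * d)).prod (sparseMeasure n (t * d)))

/-- View an ℕ-valued matrix as a real matrix. -/
def natMat {n : ℕ} (A : Fin n → Fin n → ℕ) : Fin n → Fin n → ℝ := fun i j => (A i j : ℝ)

/-- The Gibbs measure `μ_{β,X}` as a probability measure on configurations. -/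
def gibbsMeasure {n : ℕ} (β : ℝ) (X : Fin n → Fin n → ℝ) : Measure (Fin n → Bool) :=
  ∑ σ : Fin n → Bool, ENNReal.ofReal (gibbs β X σ) • Measure.dirac σ

/-- The bisection Gibbs measure `μ^bis_{β,X}` as a measure on configurations. -/
def gibbsBisMeasure {n : ℕ} (β : ℝ) (X : Fin n → Fin n → ℝ) : Measure (Fin n → Bool) :=
  ∑ σ : Fin n → Bool, ENNReal.ofReal (gibbsBis β X σ) • Measure.dirac σ

/-- Normalized Wasserstein distance `W_{2,n}` between measures on `{-1,1}^n`. -/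
def W2 (n : ℕ) (μ1 μ2 : Measure (Fin n → Bool)) : ℝ :=
  sInf {r : ℝ | ∃ π : Measure ((Fin n → Bool) × (Fin n → Bool)),
    IsProbabilityMeasure π ∧ π.map Prod.fst = μ1 ∧ π.map Prod.snd = μ2 ∧
    r = Real.sqrt (∫ p, (1 / (n : ℝ)) * ∑ i, (spin (p.1 i) - spin (p.2 i)) ^ 2 ∂π)}

open scoped Classical in
/-- Overlap-restricted coupled partition function `Z^S_{X,Y}`. -/
def Zres {n : ℕ} (β : ℝ) (S : Set ℝ) (X Y : Fin n → Fin n → ℝ) : ℝ :=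
  ∑ σ1 : Fin n → Bool, ∑ σ2 : Fin n → Bool,
    if overlap σ1 σ2 ∈ S then Real.exp (-β * (Ham X σ1 + Ham Y σ2)) else 0

open scoped Classical in
/-- Overlap-restricted coupled bisection partition function `Z^{S,bis}_{X,Y}`. -/
def ZresBis {n : ℕ} (β : ℝ) (S : Set ℝ) (X Y : Fin n → Fin n → ℝ) : ℝ :=
  ∑ σ1 : Fin n → Bool, ∑ σ2 : Fin n → Bool,
    if isBis σ1 ∧ isBis σ2 ∧ overlap σ1 σ2 ∈ S
    then Real.exp (-β * (Ham X σ1 + Ham Y σ2)) else 0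

/-- The matrix with a single `1` in position `(i,j)`. -/
def Jmat {n : ℕ} (i j : Fin n) : Fin n → Fin n → ℝ :=
  fun a b => if a = i ∧ b = j then 1 else 0

end

/-! Along the line `ξ ↦ X + ξ J_{ij}` the Gibbs weight is a ratio of exponential sums in `ξ`.
Writing `h = H(·; J_{ij}) = σ(i) σ(j)` and `⟨·⟩` for the Gibbs average at `X + ξ J_{ij}`, one gets
`f' = -b f (h(σ) - ⟨h⟩)` and `f'' = b² f ((h(σ) - ⟨h⟩)² - (⟨h²⟩ - ⟨h⟩²))` with `b = β/√d`.
Since `|h| ≤ 1`, this gives `|f''| ≤ 6 b² f`, and Taylor's theorem with the Lagrange remainder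
on `[0, 1]` concludes. -/

open Finset Real

theorem taylor_mean_remainder_lagrange_two {f f' f'' : ℝ → ℝ} (hf : ∀ x, HasDerivAt f (f' x) x)
    (hf' : ∀ x, HasDerivAt f' (f'' x) x) {a b : ℝ} (hab : a < b) :
    ∃ c ∈ Set.Ioo a b, f b - f a - f' a * (b - a) = f'' c * (b - a) ^ 2 / 2 := by
  set K := (f b - f a - f' a * (b - a)) / (b - a) ^ 2 with hK
  -- `K` is chosen so that `g a = g b = 0`; Rolle then gives `2 K = f'' c`.
  set g : ℝ → ℝ := fun x => f b - f x - f' x * (b - x) - K * (b - x) ^ 2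
  have hg : ∀ x, HasDerivAt g ((b - x) * (2 * K - f'' x)) x := by
    intro x
    have hlin : HasDerivAt (fun x : ℝ => b - x) (-1) x := by
      simpa using (hasDerivAt_id x).const_sub b
    have := (((hasDerivAt_const x (f b)).sub (hf x)).sub ((hf' x).mul hlin)).sub
      ((hlin.pow 2).const_mul K)
    exact this.congr_deriv (by push_cast; ring)
  have hba : b - a ≠ 0 := sub_ne_zero.mpr hab.ne'
  have hga : g a = g b := by
    simp only [g, hK]
    field_simp
    ring
  obtain ⟨c, hc, hgc⟩ := exists_hasDerivAt_eq_zero hab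
    (fun x _ => (hg x).continuousAt.continuousWithinAt) hga (fun x _ => hg x)
  have hbc : b - c ≠ 0 := sub_ne_zero.mpr hc.2.ne'
  have hKc : 2 * K = f'' c := by
    have := (mul_eq_zero.mp hgc).resolve_left hbc
    linarith
  refine ⟨c, hc, ?_⟩
  rw [← hKc, hK]
  field_simp

theorem abs_spin (b : Bool) : |spin b| = 1 := by
  cases b <;> simp [spin]

theorem Ham_add_mul {n : ℕ} (X Y : Fin n → Fin n → ℝ) (ξ : ℝ) (τ : Fin n → Bool) :
    Ham (fun a b => X a b + ξ * Y a b) τ = Ham X τ + ξ * Ham Y τ := by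
  simp only [Ham, add_mul, sum_add_distrib, mul_sum, mul_assoc]

theorem Ham_Jmat {n : ℕ} (i j : Fin n) (τ : Fin n → Bool) :
    Ham (Jmat i j) τ = spin (τ i) * spin (τ j) := by
  simp [Ham, Jmat, ite_and]

theorem Zpart_pos {n : ℕ} (β : ℝ) (X : Fin n → Fin n → ℝ) : 0 < Zpart β X :=
  sum_pos (fun _ _ => exp_pos _) univ_nonempty

theorem gibbs_pos {n : ℕ} (β : ℝ) (X : Fin n → Fin n → ℝ) (σ : Fin n → Bool) :
    0 < gibbs β X σ :=
  div_pos (exp_pos _) (Zpart_pos β X)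

theorem sum_gibbs {n : ℕ} (β : ℝ) (X : Fin n → Fin n → ℝ) : ∑ σ, gibbs β X σ = 1 := by
  simp only [gibbs, ← sum_div]
  exact div_self (Zpart_pos β X).ne'

theorem abs_avg1_le {n : ℕ} (β : ℝ) (X : Fin n → Fin n → ℝ) {g : (Fin n → Bool) → ℝ} {L : ℝ}
    (hg : ∀ τ, |g τ| ≤ L) : |avg1 β X g| ≤ L :=
  calc |avg1 β X g| ≤ ∑ τ, |g τ * gibbs β X τ| := abs_sum_le_sum_abs _ _
    _ ≤ ∑ τ, L * gibbs β X τ := by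
        gcongr with τ
        rw [abs_mul, abs_of_pos (gibbs_pos β X τ)]
        exact mul_le_mul_of_nonneg_right (hg τ) (gibbs_pos β X τ).le
    _ = L := by rw [← mul_sum, sum_gibbs, mul_one]

section Line

variable {n : ℕ} (β : ℝ) (X Y : Fin n → Fin n → ℝ)

theorem hasDerivAt_exp_Ham_line (ξ : ℝ) (τ : Fin n → Bool) :
    HasDerivAt (fun ξ => exp (-β * Ham (fun a b => X a b + ξ * Y a b) τ))
      (exp (-β * Ham (fun a b => X a b + ξ * Y a b) τ) * (-β * Ham Y τ)) ξ := by
  simp only [Ham_add_mul]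
  refine HasDerivAt.exp ?_
  simpa using (((hasDerivAt_id ξ).mul_const (Ham Y τ)).const_add (Ham X τ)).const_mul (-β)

theorem hasDerivAt_Zpart_line (ξ : ℝ) :
    HasDerivAt (fun ξ => Zpart β (fun a b => X a b + ξ * Y a b))
      (-β * Zpart β (fun a b => X a b + ξ * Y a b) *
        avg1 β (fun a b => X a b + ξ * Y a b) (Ham Y)) ξ := by
  refine (HasDerivAt.fun_sum fun τ _ => hasDerivAt_exp_Ham_line β X Y ξ τ).congr_deriv ?_
  have hZ := (Zpart_pos β (fun a b => X a b + ξ * Y a b)).ne'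
  rw [avg1, mul_sum]
  refine sum_congr rfl fun τ _ => ?_
  rw [gibbs]
  field_simp

theorem hasDerivAt_gibbs_line (σ : Fin n → Bool) (ξ : ℝ) :
    HasDerivAt (fun ξ => gibbs β (fun a b => X a b + ξ * Y a b) σ)
      (-β * gibbs β (fun a b => X a b + ξ * Y a b) σ *
        (Ham Y σ - avg1 β (fun a b => X a b + ξ * Y a b) (Ham Y))) ξ := by
  refine ((hasDerivAt_exp_Ham_line β X Y ξ σ).div (hasDerivAt_Zpart_line β X Y ξ)
    (Zpart_pos β _).ne').congr_deriv ?_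
  have hZ := (Zpart_pos β (fun a b => X a b + ξ * Y a b)).ne'
  rw [gibbs]
  field_simp
  ring

theorem hasDerivAt_avg1_line (g : (Fin n → Bool) → ℝ) (ξ : ℝ) :
    HasDerivAt (fun ξ => avg1 β (fun a b => X a b + ξ * Y a b) g)
      (-β * (avg1 β (fun a b => X a b + ξ * Y a b) (fun τ => g τ * Ham Y τ) -
        avg1 β (fun a b => X a b + ξ * Y a b) g *
          avg1 β (fun a b => X a b + ξ * Y a b) (Ham Y))) ξ := by
  refine (HasDerivAt.fun_sum fun τ _ =>
    (hasDerivAt_gibbs_line β X Y τ ξ).const_mul (g τ)).congr_deriv ?_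
  set A := avg1 β (fun a b => X a b + ξ * Y a b) (Ham Y)
  simp only [avg1, sum_mul, ← sum_sub_distrib, mul_sum]
  exact sum_congr rfl fun τ _ => by ring

theorem hasDerivAt_deriv_gibbs_line (σ : Fin n → Bool) (ξ : ℝ) :
    HasDerivAt
      (fun ξ => -β * gibbs β (fun a b => X a b + ξ * Y a b) σ *
        (Ham Y σ - avg1 β (fun a b => X a b + ξ * Y a b) (Ham Y)))
      (β ^ 2 * gibbs β (fun a b => X a b + ξ * Y a b) σ *
        ((Ham Y σ - avg1 β (fun a b => X a b + ξ * Y a b) (Ham Y)) ^ 2 -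
          (avg1 β (fun a b => X a b + ξ * Y a b) (fun τ => Ham Y τ * Ham Y τ) -
            avg1 β (fun a b => X a b + ξ * Y a b) (Ham Y) ^ 2))) ξ := by
  refine (((hasDerivAt_gibbs_line β X Y σ ξ).const_mul (-β)).mul
    ((hasDerivAt_avg1_line β X Y (Ham Y) ξ).const_sub (Ham Y σ))).congr_deriv ?_
  ring

end Line

theorem abs_second_deriv_gibbs_line_le {n : ℕ} (β : ℝ) (X Y : Fin n → Fin n → ℝ) {L : ℝ}
    (hY : ∀ τ, |Ham Y τ| ≤ L) (σ : Fin n → Bool) :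
    |β ^ 2 * gibbs β X σ * ((Ham Y σ - avg1 β X (Ham Y)) ^ 2 -
        (avg1 β X (fun τ => Ham Y τ * Ham Y τ) - avg1 β X (Ham Y) ^ 2))|
      ≤ 6 * L ^ 2 * β ^ 2 * gibbs β X σ := by
  have hA := abs_le.mp (abs_avg1_le β X hY)
  have hB := abs_le.mp (abs_avg1_le β X (L := L ^ 2) fun τ => by
    rw [abs_mul, ← sq]; exact pow_le_pow_left₀ (abs_nonneg _) (hY τ) 2)
  have hh := abs_le.mp (hY σ)
  have hG : 0 ≤ β ^ 2 * gibbs β X σ := mul_nonneg (sq_nonneg β) (gibbs_pos β X σ).le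
  rw [abs_mul, abs_of_nonneg hG,
    show 6 * L ^ 2 * β ^ 2 * gibbs β X σ = β ^ 2 * gibbs β X σ * (6 * L ^ 2) by ring]
  refine mul_le_mul_of_nonneg_left ?_ hG
  rw [abs_le]
  constructor <;> nlinarith

/-- second-order Taylor bound on the Gibbs weight under a unit
increment of a single matrix entry. -/
theorem stmt_11 (n : ℕ) (X : Fin n → Fin n → ℝ) (β d : ℝ) (hd : 0 < d)
    (σ : Fin n → Bool) (i j : Fin n) :
    ∃ ξ ∈ Set.Icc (0 : ℝ) 1,
      |gibbs (β / Real.sqrt d) (fun a b => X a b + Jmat i j a b) σ -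
        gibbs (β / Real.sqrt d) X σ -
        deriv (fun ξ' : ℝ => gibbs (β / Real.sqrt d) (fun a b => X a b + ξ' * Jmat i j a b) σ) 0|
      ≤ (3 * β ^ 2 / d) * gibbs (β / Real.sqrt d) (fun a b => X a b + ξ * Jmat i j a b) σ := by
  set b := β / Real.sqrt d
  have hb : β ^ 2 / d = b ^ 2 := by rw [div_pow, sq_sqrt hd.le]
  have hJ : ∀ τ, |Ham (Jmat i j) τ| ≤ 1 := fun τ => by simp [Ham_Jmat, abs_mul, abs_spin]
  obtain ⟨c, hc, htaylor⟩ := taylor_mean_remainder_lagrange_two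
    (hasDerivAt_gibbs_line b X (Jmat i j) σ) (hasDerivAt_deriv_gibbs_line b X (Jmat i j) σ)
    zero_lt_one
  refine ⟨c, Set.Ioo_subset_Icc_self hc, ?_⟩
  rw [(hasDerivAt_gibbs_line b X (Jmat i j) σ 0).deriv]
  simp only [one_mul, zero_mul, add_zero, sub_zero, mul_one, one_pow] at htaylor ⊢
  rw [htaylor]
  have hbound :=
    abs_second_deriv_gibbs_line_le b (fun a b => X a b + c * Jmat i j a b) (Jmat i j) hJ σ
  rw [abs_div, abs_two, mul_div_assoc, hb]
  linarith
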